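/- arXiv:1404.3250 — 2 statements merged into one kernel-verified Lean document; each statement's English description precedes it below -/
import Mathlib

section
/- Let B ∈ {0,1}^{n×k} and let A be obtained from B by changing a single entry from 1 to 0. Then the number of full-rank matrices in S(A,q) is at most (1/q) times the number of full-rank matrices in S(B,q). -/
/-- The support set S(B,q): matrices over F vanishing wherever the binary
pattern B is zero (false). -/
def patternSupport (F : Type*) [Field F] {n k : ℕ} (B : Matrix (Fin n) (Fin k) Bool) :
    Set (Matrix (Fin n) (Fin k) F) :=
  {M | ∀ i j, B i j = false → M i j = 0}

/-- The number of full-rank matrices respecting the zero pattern P. -/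
noncomputable def numFullRank (F : Type*) [Field F] [Fintype F] {n k : ℕ}
    (P : Matrix (Fin n) (Fin k) Bool) : ℕ :=
  Nat.card {M : Matrix (Fin n) (Fin k) F // M ∈ patternSupport F P ∧ M.rank = min n k}

/-!
Fix every row but row `i₀`, and let `W` be their span. Row `i₀` ranges over a subspace `V` for
the pattern `B` and over the hyperplane `V ∩ H`, `H = {u | u j₀ = 0}`, for `A`; the matrix has full
rank iff `min n k ≤ dim (W ⊔ F ∙ u)`, which holds for every `u`, for `u ∉ W`, or for no `u`. In each
case the count over `V ∩ H` is at most `1/q` of the count over `V`, because `|V| = q |V ∩ H|` while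
`|V ∩ W| ≤ q |V ∩ W ∩ H|`. Summing over the other rows gives the theorem.
-/

open Submodule Module LinearMap

section Hyperplane

variable {F E : Type*} [Field F] [AddCommGroup E] [Module F E]

theorem finrank_le_finrank_inf_ker_add_one [FiniteDimensional F E] (U : Submodule F E)
    (φ : Dual F E) : finrank F U ≤ finrank F ↥(U ⊓ ker φ) + 1 := by
  rcases eq_or_ne φ 0 with rfl | hφ
  · rw [LinearMap.ker_zero, inf_top_eq]; omega
  have hsup := finrank_sup_add_finrank_inf_eq U (ker φ)
  have hker := Dual.finrank_ker_add_one_of_ne_zero hφ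
  have := (U ⊔ ker φ).finrank_le
  omega

theorem finrank_inf_ker_add_one [FiniteDimensional F E] {U : Submodule F E} {φ : Dual F E}
    {e : E} (he : e ∈ U) (hφe : φ e ≠ 0) : finrank F ↥(U ⊓ ker φ) + 1 = finrank F U := by
  have hφ : φ ≠ 0 := fun h => hφe (by simp [h])
  have hsup := finrank_sup_add_finrank_inf_eq U (ker φ)
  have hker := Dual.finrank_ker_add_one_of_ne_zero hφ
  have hlarge : finrank F ↥(ker φ ⊔ F ∙ e) ≤ finrank F ↥(U ⊔ ker φ) :=
    Submodule.finrank_mono (sup_le le_sup_right ((span_singleton_le_iff_mem e _).mpr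
      (le_sup_left (b := ker φ) he)))
  rw [finrank_sup_span_singleton (by simpa using hφe)] at hlarge
  have := (U ⊔ ker φ).finrank_le
  omega

theorem finrank_sup_span_singleton_le [FiniteDimensional F E] (W : Submodule F E) (u : E) :
    finrank F ↥(W ⊔ F ∙ u) ≤ finrank F W + 1 := by
  by_cases hu : u ∈ W
  · rw [sup_eq_left.mpr ((span_singleton_le_iff_mem u W).mpr hu)]; omega
  · rw [finrank_sup_span_singleton hu]

theorem finrank_add_one_le_finrank_sup_span_singleton_iff [FiniteDimensional F E]
    (W : Submodule F E) (u : E) : finrank F W + 1 ≤ finrank F ↥(W ⊔ F ∙ u) ↔ u ∉ W := by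
  by_cases hu : u ∈ W
  · rw [sup_eq_left.mpr ((span_singleton_le_iff_mem u W).mpr hu)]; simp [hu]
  · simp [finrank_sup_span_singleton hu, hu]

variable [Finite E]

theorem natCard_le_natCard_mul_natCard_inf_ker [Finite F] (U : Submodule F E) (φ : Dual F E) :
    Nat.card U ≤ Nat.card F * Nat.card ↥(U ⊓ ker φ) := by
  rw [natCard_eq_pow_finrank (K := F) (V := U),
    natCard_eq_pow_finrank (K := F) (V := ↥(U ⊓ ker φ)), ← pow_succ']
  exact Nat.pow_le_pow_right Nat.card_pos (finrank_le_finrank_inf_ker_add_one U φ)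

theorem natCard_eq_natCard_mul_natCard_inf_ker {U : Submodule F E} {φ : Dual F E}
    {e : E} (he : e ∈ U) (hφe : φ e ≠ 0) :
    Nat.card U = Nat.card F * Nat.card ↥(U ⊓ ker φ) := by
  rw [natCard_eq_pow_finrank (K := F) (V := U),
    natCard_eq_pow_finrank (K := F) (V := ↥(U ⊓ ker φ)), ← pow_succ',
    finrank_inf_ker_add_one he hφe]

theorem natCard_mul_ncard_inf_ker_diff_le [Finite F] {V : Submodule F E} {φ : Dual F E}
    {e : E} (he : e ∈ V) (hφe : φ e ≠ 0) (Z : Submodule F E) :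
    Nat.card F * (((V ⊓ ker φ : Submodule F E) : Set E) \ Z).ncard
      ≤ ((V : Set E) \ Z).ncard := by
  have hV := Set.ncard_inter_add_ncard_sdiff_eq_ncard (V : Set E) Z
  have hVK := Set.ncard_inter_add_ncard_sdiff_eq_ncard ((V ⊓ ker φ : Submodule F E) : Set E) Z
  have hZ := natCard_le_natCard_mul_natCard_inf_ker (V ⊓ Z) φ
  have hVeq := natCard_eq_natCard_mul_natCard_inf_ker he hφe
  rw [inf_right_comm] at hZ
  simp only [← coe_inf, ← Nat.card_coe_set_eq, SetLike.coe_sort_coe] at hV hVK ⊢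
  have hVK' := congrArg (Nat.card F * ·) hVK
  simp only [mul_add] at hVK'
  linarith

theorem natCard_mul_ncard_inf_ker_le [Finite F] {V : Submodule F E} {φ : Dual F E}
    {e : E} (he : e ∈ V) (hφe : φ e ≠ 0) (W : Submodule F E) (m : ℕ) :
    Nat.card F * {u | u ∈ V ⊓ ker φ ∧ m ≤ finrank F ↥(W ⊔ F ∙ u)}.ncard
      ≤ {u | u ∈ V ∧ m ≤ finrank F ↥(W ⊔ F ∙ u)}.ncard := by
  rcases le_or_gt m (finrank F W) with hm | hm
  · have hall (u : E) : m ≤ finrank F ↥(W ⊔ F ∙ u) := hm.trans (finrank_mono le_sup_left)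
    simp only [hall, and_true, ← Nat.card_coe_set_eq]
    exact (natCard_eq_natCard_mul_natCard_inf_ker he hφe).ge
  rcases eq_or_lt_of_le (Nat.succ_le_of_lt hm) with rfl | hm
  · simp only [finrank_add_one_le_finrank_sup_span_singleton_iff]
    exact natCard_mul_ncard_inf_ker_diff_le he hφe W
  · have hnone (u : E) : ¬ m ≤ finrank F ↥(W ⊔ F ∙ u) :=
      fun h => (h.trans (finrank_sup_span_singleton_le W u)).not_gt hm
    simp [hnone]

end Hyperplane

section PiSplitAt

variable {ι β : Type*} [DecidableEq ι]

theorem range_piSplitAt_symm (i : ι) (b : β) (w : {j // j ≠ i} → β) :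
    Set.range ((Equiv.piSplitAt i fun _ => β).symm (b, w)) = insert b (Set.range w) := by
  ext x
  simp only [Equiv.piSplitAt, Equiv.coe_fn_symm_mk, Set.mem_range, Set.mem_insert_iff]
  constructor
  · rintro ⟨j, rfl⟩
    by_cases h : j = i
    · simp [h]
    · exact Or.inr ⟨⟨j, h⟩, by simp [h]⟩
  · rintro (rfl | ⟨j, rfl⟩)
    · exact ⟨i, by simp⟩
    · exact ⟨j, by simp [j.2]⟩

theorem forall_piSplitAt_symm_iff (p : ι → β → Prop) (i : ι) (b : β) (w : {j // j ≠ i} → β) :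
    (∀ j, p j ((Equiv.piSplitAt i fun _ => β).symm (b, w) j)) ↔
      p i b ∧ ∀ j : {j // j ≠ i}, p j (w j) := by
  simp only [Equiv.piSplitAt, Equiv.coe_fn_symm_mk]
  constructor
  · intro h
    exact ⟨by simpa using h i, fun j => by simpa [j.2] using h j⟩
  · rintro ⟨hi, hw⟩ j
    by_cases h : j = i
    · subst h; simpa using hi
    · simpa [h] using hw ⟨j, h⟩

theorem natCard_subtype_eq_sum_piSplitAt [Fintype ι] [Fintype β] (i : ι)
    (p : (ι → β) → Prop) :
    Nat.card {v // p v} = ∑ w : {j // j ≠ i} → β,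
      Nat.card {b // p ((Equiv.piSplitAt i fun _ => β).symm (b, w))} := by
  let e := (Equiv.piSplitAt i fun _ => β).trans (Equiv.prodComm _ _)
  rw [← Nat.card_sigma, ← Nat.card_congr (Equiv.subtypeProdEquivSigmaSubtype _)]
  exact Nat.card_congr (e.subtypeEquiv fun v => by
    simp only [e, Equiv.trans_apply, Equiv.prodComm_apply, Prod.fst_swap, Prod.snd_swap,
      Prod.mk.eta, Equiv.symm_apply_apply])

end PiSplitAt

section Families

variable {ι F E : Type*} [Field F] [AddCommGroup E] [Module F E]

def familiesOfRankAtLeast (S : ι → Submodule F E) (m : ℕ) : Set (ι → E) :=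
  {v | (∀ i, v i ∈ S i) ∧ m ≤ finrank F (span F (Set.range v))}

variable [DecidableEq ι]

theorem piSplitAt_symm_mem_familiesOfRankAtLeast_iff (S : ι → Submodule F E) (m : ℕ) (i : ι)
    (b : E) (w : {j // j ≠ i} → E) :
    (Equiv.piSplitAt i fun _ => E).symm (b, w) ∈ familiesOfRankAtLeast S m ↔
      (∀ j : {j // j ≠ i}, w j ∈ S j) ∧
        b ∈ S i ∧ m ≤ finrank F ↥(span F (Set.range w) ⊔ F ∙ b) := by
  rw [familiesOfRankAtLeast, Set.mem_ofPred_eq, forall_piSplitAt_symm_iff (fun j x => x ∈ S j),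
    range_piSplitAt_symm, span_insert, sup_comm]
  tauto

theorem natCard_mul_ncard_familiesOfRankAtLeast_update_le [Fintype ι] [Finite F] [Fintype E]
    (S : ι → Submodule F E) (i₀ : ι) {φ : Dual F E} {e : E} (he : e ∈ S i₀) (hφe : φ e ≠ 0)
    (m : ℕ) :
    Nat.card F * (familiesOfRankAtLeast (Function.update S i₀ (S i₀ ⊓ ker φ)) m).ncard
      ≤ (familiesOfRankAtLeast S m).ncard := by
  simp only [← Nat.card_coe_set_eq]
  rw [natCard_subtype_eq_sum_piSplitAt i₀, natCard_subtype_eq_sum_piSplitAt i₀, Finset.mul_sum]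
  refine Finset.sum_le_sum fun w _ => ?_
  have hS (j : {j // j ≠ i₀}) : Function.update S i₀ (S i₀ ⊓ ker φ) j = S j :=
    Function.update_of_ne j.2 _ _
  simp only [piSplitAt_symm_mem_familiesOfRankAtLeast_iff, hS, Function.update_self]
  by_cases hw : ∀ j : {j // j ≠ i₀}, w j ∈ S j
  · simp only [hw, implies_true, true_and]
    exact natCard_mul_ncard_inf_ker_le he hφe _ m
  · simp only [hw, false_and, Nat.card_of_isEmpty, mul_zero, le_refl]

end Families

section Pattern

variable (F : Type*) [Field F] {κ : Type*}

def patternSubmodule (b : κ → Bool) : Submodule F (κ → F) :=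
  Submodule.pi {j | b j = false} fun _ => ⊥

variable {F}

theorem mem_patternSubmodule {b : κ → Bool} {u : κ → F} :
    u ∈ patternSubmodule F b ↔ ∀ j, b j = false → u j = 0 := by
  simp [patternSubmodule]

theorem patternSubmodule_update_false [DecidableEq κ] (b : κ → Bool) (j₀ : κ) :
    patternSubmodule F (Function.update b j₀ false)
      = patternSubmodule F b ⊓ ker (LinearMap.proj j₀ : (κ → F) →ₗ[F] F) := by
  ext u
  simp only [mem_inf, mem_patternSubmodule, LinearMap.mem_ker, LinearMap.proj_apply]
  constructor
  · intro h
    exact ⟨fun j hj => h j (by by_cases hj₀ : j = j₀ <;> simp [hj₀, hj]), h j₀ (by simp)⟩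
  · rintro ⟨h, h₀⟩ j hj
    by_cases hj₀ : j = j₀
    · rwa [hj₀]
    · exact h j (by simpa [hj₀] using hj)

theorem patternSubmodule_rows_eq_update_inf_ker {ι : Type*} [DecidableEq ι] [DecidableEq κ]
    (A B : ι → κ → Bool) (i₀ : ι) (j₀ : κ) (hA : A i₀ j₀ = false)
    (hAB : ∀ i j, (i, j) ≠ (i₀, j₀) → A i j = B i j) :
    (fun i => patternSubmodule F (A i)) = Function.update (fun i => patternSubmodule F (B i)) i₀
      (patternSubmodule F (B i₀) ⊓ ker (LinearMap.proj j₀ : (κ → F) →ₗ[F] F)) := by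
  funext i
  rcases eq_or_ne i i₀ with rfl | hi
  · rw [Function.update_self, ← patternSubmodule_update_false]
    congr 1; funext j
    rcases eq_or_ne j j₀ with rfl | hj
    · simpa using hA
    · rw [Function.update_of_ne hj]; exact hAB i j (by simp [hj])
  · rw [Function.update_of_ne hi]
    congr 1; funext j; exact hAB i j (by simp [hi])

theorem numFullRank_eq_ncard_familiesOfRankAtLeast [Fintype F] {n k : ℕ}
    (P : Matrix (Fin n) (Fin k) Bool) :
    numFullRank F P
      = (familiesOfRankAtLeast (fun i => patternSubmodule F (P i)) (min n k)).ncard := by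
  refine Nat.card_congr (Equiv.subtypeEquivRight fun M => ?_)
  have hle : M.rank ≤ min n k := le_min M.rank_le_height M.rank_le_width
  rw [M.rank_eq_finrank_span_row] at hle ⊢
  simp only [familiesOfRankAtLeast, Set.mem_ofPred_eq, mem_patternSubmodule, patternSupport]
  exact and_congr_right fun _ => ⟨Eq.ge, hle.antisymm⟩

end Pattern

/-- If A is obtained from B by changing a single entry from 1 to 0, then the
number of full-rank matrices in S(A,q) is at most (1/q) times the number of
full-rank matrices in S(B,q). -/
theorem stmt9 (F : Type*) [Field F] [Fintype F] (q n k : ℕ)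
    (hq : Fintype.card F = q)
    (A B : Matrix (Fin n) (Fin k) Bool) (i₀ : Fin n) (j₀ : Fin k)
    (hB : B i₀ j₀ = true) (hA : A i₀ j₀ = false)
    (hAB : ∀ i j, (i, j) ≠ (i₀, j₀) → A i j = B i j) :
    (numFullRank F A : ℚ) ≤ (numFullRank F B : ℚ) / q := by
  have he : Pi.single j₀ 1 ∈ patternSubmodule F (B i₀) := by
    rw [mem_patternSubmodule]
    intro j hj
    exact Pi.single_eq_of_ne (by rintro rfl; simp [hB] at hj) _
  have key := natCard_mul_ncard_familiesOfRankAtLeast_update_le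
    (fun i => patternSubmodule F (B i)) i₀ (φ := LinearMap.proj j₀) he (by simp) (min n k)
  rw [← patternSubmodule_rows_eq_update_inf_ker A B i₀ j₀ hA hAB,
    ← numFullRank_eq_ncard_familiesOfRankAtLeast, ← numFullRank_eq_ncard_familiesOfRankAtLeast,
    Nat.card_eq_fintype_card, hq] at key
  have hq0 : (0 : ℚ) < q := by exact_mod_cast hq ▸ Fintype.card_pos
  rw [le_div_iff₀ hq0, mul_comm]
  exact_mod_cast key
end

section
/- Let B ∈ {0,1}^{n×k} with n ≤ k, and let M be a random matrix uniform on S(B,q) (entries zero where B is zero, remaining entries i.i.d. uniform on F_q). Then Pr(rank M = n) ≤ ∏_{i=k−n+1}^{k} (1 − q^{-i}), with equality when B is the all-ones matrix. -/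
/-!
Row `i` of a matrix in `S(B,q)` ranges over the subspace `Vᵢ ⊆ F^k` of vectors supported
where row `i` of `B` is one, independently of the other rows, and `rank M = n` means that the
rows are linearly independent. Choose the rows one at a time: once `v₀, …, vᵢ₋₁` are
independent they span a subspace `W` with `q^i` elements, and the dimension formula
`dim (Vᵢ ⊓ W) ≥ dim Vᵢ + dim W - k` gives `|Vᵢ ⊓ W| ≥ |Vᵢ| q^i / q^k`, so `vᵢ ∉ W` with
probability at most `1 - q^(i-k)`. For `B` all ones every `Vᵢ` is `F^k` and these bounds are
the exact count of independent tuples.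
-/

open Module Submodule

theorem Matrix.rank_eq_card_iff_linearIndependent_row {m n R : Type*} [Field R] [Fintype m]
    [Fintype n] (M : Matrix m n R) : M.rank = Fintype.card m ↔ LinearIndependent R M.row := by
  rw [M.rank_eq_finrank_span_row, linearIndependent_iff_card_eq_finrank_span, Set.finrank,
    eq_comm]

theorem prod_one_sub_pow_div_pow_eq_prod_Icc {K : Type*} [Field K] {x : K} (hx : x ≠ 0)
    {n k : ℕ} (hnk : n ≤ k) :
    ∏ i : Fin n, (1 - x ^ (i : ℕ) / x ^ k) =
      ∏ i ∈ Finset.Icc (k - n + 1) k, (1 - 1 / x ^ i) := by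
  have hterm : ∀ i ∈ Finset.range n, 1 - x ^ i / x ^ k = 1 - 1 / x ^ (k - i) := fun i hi => by
    rw [← pow_sub_mul_pow x ((Finset.mem_range.mp hi).le.trans hnk)]
    field_simp
  rw [Fin.prod_univ_eq_prod_range (fun i => 1 - x ^ i / x ^ k), Finset.prod_congr rfl hterm,
    Finset.range_eq_Ico, Finset.prod_Ico_reflect (fun i => 1 - 1 / x ^ i) 0 (by omega),
    ← Finset.Ico_add_one_right_eq_Icc, Nat.sub_zero]
  congr 2
  omega

section Counting

variable {F E : Type*} [Field F] [AddCommGroup E] [Module F E]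

variable (F) in
def linearIndependentMemSnocEquiv {n : ℕ} (V : Fin (n + 1) → Submodule F E) :
    {v : Fin (n + 1) → E // (∀ i, v i ∈ V i) ∧ LinearIndependent F v} ≃
      Σ s : {v : Fin n → E // (∀ i, v i ∈ V i.castSucc) ∧ LinearIndependent F v},
        {x // x ∈ V (Fin.last n) ∧ x ∉ span F (Set.range s.1)} where
  toFun v := ⟨⟨Fin.init v.1, fun i => v.2.1 i.castSucc,
      (linearIndependent_finSucc'.mp v.2.2).1⟩,
    ⟨v.1 (Fin.last n), v.2.1 (Fin.last n), (linearIndependent_finSucc'.mp v.2.2).2⟩⟩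
  invFun s := ⟨Fin.snoc s.1.1 s.2.1,
    Fin.lastCases (by simpa using s.2.2.1) (fun i => by simpa using s.1.2.1 i),
    linearIndependent_finSnoc.mpr ⟨s.1.2.2, s.2.2.2⟩⟩
  left_inv v := by simp [Fin.snoc_init_self]
  right_inv s := by ext <;> simp

noncomputable def probLinearIndependent {n : ℕ} (V : Fin n → Submodule F E) : ℚ :=
  Nat.card {v : Fin n → E // (∀ i, v i ∈ V i) ∧ LinearIndependent F v} /
    ∏ i, (Nat.card (V i) : ℚ)

variable [Finite F] [Finite E]

theorem card_mul_card_le_card_inf_mul_card (V W : Submodule F E) :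
    Nat.card V * Nat.card W ≤ Nat.card ↥(V ⊓ W) * Nat.card E := by
  rw [natCard_eq_pow_finrank (K := F) (V := V), natCard_eq_pow_finrank (K := F) (V := W),
    natCard_eq_pow_finrank (K := F) (V := ↥(V ⊓ W)), natCard_eq_pow_finrank (K := F) (V := E),
    ← pow_add, ← pow_add]
  refine Nat.pow_le_pow_right Nat.card_pos ?_
  have h1 := Submodule.finrank_sup_add_finrank_inf_eq V W
  have h2 := Submodule.finrank_le (V ⊔ W)
  omega

theorem card_mem_and_not_mem_le (V W : Submodule F E) :
    (Nat.card {x // x ∈ V ∧ x ∉ W} : ℚ) ≤ Nat.card V * (1 - Nat.card W / Nat.card E) := by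
  have hsplit : Nat.card ↥(V ⊓ W) + Nat.card {x // x ∈ V ∧ x ∉ W} = Nat.card V := by
    have := Set.ncard_inter_add_ncard_sdiff_eq_ncard (V : Set E) (W : Set E)
    rw [← Nat.card_coe_set_eq, ← Nat.card_coe_set_eq, ← Nat.card_coe_set_eq] at this
    exact this
  have hinf : (Nat.card V : ℚ) * Nat.card W / Nat.card E ≤ Nat.card ↥(V ⊓ W) := by
    rw [div_le_iff₀ (by exact_mod_cast Nat.card_pos)]
    exact_mod_cast card_mul_card_le_card_inf_mul_card V W
  rw [← hsplit] at hinf ⊢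
  push_cast at hinf ⊢
  rw [mul_one_sub, ← mul_div_assoc]
  linarith

theorem card_linearIndependent_mem_le {n : ℕ} (hn : n ≤ finrank F E)
    (V : Fin n → Submodule F E) :
    (Nat.card {v : Fin n → E // (∀ i, v i ∈ V i) ∧ LinearIndependent F v} : ℚ) ≤
      ∏ i : Fin n,
        Nat.card (V i) * (1 - (Nat.card F : ℚ) ^ (i : ℕ) / Nat.card F ^ finrank F E) := by
  induction n with
  | zero => simp
  | succ n ih =>
    set q : ℚ := (Nat.card F : ℚ)
    have hfiber (s : {v : Fin n → E // (∀ i, v i ∈ V i.castSucc) ∧ LinearIndependent F v}) :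
        (Nat.card {x // x ∈ V (Fin.last n) ∧ x ∉ span F (Set.range s.1)} : ℚ) ≤
          Nat.card (V (Fin.last n)) * (1 - q ^ n / q ^ finrank F E) := by
      have hspan : Nat.card (span F (Set.range s.1)) = Nat.card F ^ n := by
        rw [natCard_eq_pow_finrank (K := F), finrank_span_eq_card s.2.2, Fintype.card_fin]
      simpa [hspan, natCard_eq_pow_finrank (K := F) (V := E)] using
        card_mem_and_not_mem_le (V (Fin.last n)) (span F (Set.range s.1))
    have hfactor : 0 ≤ (Nat.card (V (Fin.last n)) : ℚ) * (1 - q ^ n / q ^ finrank F E) := by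
      have hq : (1 : ℚ) ≤ q := Nat.one_le_cast.mpr Nat.card_pos
      refine mul_nonneg (Nat.cast_nonneg _) (sub_nonneg.mpr ?_)
      exact div_le_one_of_le₀ (pow_le_pow_right₀ hq (by omega)) (by positivity)
    let _ := Fintype.ofFinite
      {v : Fin n → E // (∀ i, v i ∈ V i.castSucc) ∧ LinearIndependent F v}
    rw [Nat.card_congr (linearIndependentMemSnocEquiv F V), Nat.card_sigma, Fin.prod_univ_castSucc]
    push_cast
    calc _ ≤ ∑ _s : {v : Fin n → E // (∀ i, v i ∈ V i.castSucc) ∧ LinearIndependent F v},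
          (Nat.card (V (Fin.last n)) : ℚ) * (1 - q ^ n / q ^ finrank F E) :=
          Finset.sum_le_sum fun s _ => hfiber s
      _ = Nat.card {v : Fin n → E // (∀ i, v i ∈ V i.castSucc) ∧ LinearIndependent F v} *
          (Nat.card (V (Fin.last n)) * (1 - q ^ n / q ^ finrank F E)) := by
          rw [Finset.sum_const, Finset.card_univ, nsmul_eq_mul, ← Nat.card_eq_fintype_card]
      _ ≤ _ := mul_le_mul_of_nonneg_right (ih (by omega) _) hfactor

theorem probLinearIndependent_le {n : ℕ} (hn : n ≤ finrank F E) (V : Fin n → Submodule F E) :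
    probLinearIndependent V ≤
      ∏ i : Fin n, (1 - (Nat.card F : ℚ) ^ (i : ℕ) / Nat.card F ^ finrank F E) := by
  have hpos : (0 : ℚ) < ∏ i, (Nat.card (V i) : ℚ) :=
    Finset.prod_pos fun i _ => Nat.cast_pos.mpr Nat.card_pos
  rw [probLinearIndependent, div_le_iff₀ hpos, mul_comm, ← Finset.prod_mul_distrib]
  exact card_linearIndependent_mem_le hn V

theorem probLinearIndependent_top {n : ℕ} (hn : n ≤ finrank F E) :
    probLinearIndependent (fun _ : Fin n => (⊤ : Submodule F E)) =
      ∏ i : Fin n, (1 - (Nat.card F : ℚ) ^ (i : ℕ) / Nat.card F ^ finrank F E) := by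
  let _ := Fintype.ofFinite F
  have hnum :
      Nat.card {v : Fin n → E // (∀ i, v i ∈ (⊤ : Submodule F E)) ∧ LinearIndependent F v} =
      ∏ i : Fin n, (Nat.card F ^ finrank F E - Nat.card F ^ (i : ℕ)) := by
    rw [Nat.card_eq_fintype_card (α := F), ← card_linearIndependent hn]
    exact Nat.card_congr (Equiv.subtypeEquivRight fun v => by simp)
  rw [probLinearIndependent, hnum, Nat.cast_prod, ← Finset.prod_div_distrib]
  refine Finset.prod_congr rfl fun i _ => ?_
  rw [Nat.cast_sub (Nat.pow_le_pow_right Nat.card_pos (by omega)), Nat.card_congr topEquiv.toEquiv,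
    natCard_eq_pow_finrank (K := F) (V := E)]
  push_cast
  field_simp

end Counting

section Pattern

variable (F : Type*) [Field F] {n k : ℕ}

def rowSubmodule (B : Matrix (Fin n) (Fin k) Bool) (i : Fin n) : Submodule F (Fin k → F) :=
  Submodule.pi {j | B i j = false} fun _ => ⊥

theorem mem_rowSubmodule {B : Matrix (Fin n) (Fin k) Bool} {i : Fin n} {v : Fin k → F} :
    v ∈ rowSubmodule F B i ↔ ∀ j, B i j = false → v j = 0 := by
  simp [rowSubmodule, Submodule.mem_pi]

theorem rowSubmodule_eq_top {B : Matrix (Fin n) (Fin k) Bool} (hB : ∀ i j, B i j = true) :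
    rowSubmodule F B = fun _ => ⊤ := by
  funext i
  simp [rowSubmodule, hB]

def patternSupportEquivPi (B : Matrix (Fin n) (Fin k) Bool) :
    patternSupport F B ≃ ∀ i, rowSubmodule F B i where
  toFun M i := ⟨M.1 i, (mem_rowSubmodule F).mpr (M.2 i)⟩
  invFun v := ⟨fun i => v i, fun i => (mem_rowSubmodule F).mp (v i).2⟩
  left_inv _ := rfl
  right_inv _ := rfl

theorem prob_rank_eq_probLinearIndependent (B : Matrix (Fin n) (Fin k) Bool) :
    (Nat.card {M : Matrix (Fin n) (Fin k) F // M ∈ patternSupport F B ∧ M.rank = n} : ℚ) /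
        Nat.card (patternSupport F B) = probLinearIndependent (rowSubmodule F B) := by
  have hnum : {M : Matrix (Fin n) (Fin k) F // M ∈ patternSupport F B ∧ M.rank = n} ≃
      {v : Fin n → Fin k → F //
        (∀ i, v i ∈ rowSubmodule F B i) ∧ LinearIndependent F v} :=
    Equiv.subtypeEquivRight fun M => by
      have hrank := M.rank_eq_card_iff_linearIndependent_row
      rw [Fintype.card_fin] at hrank
      exact and_congr (forall_congr' fun i => (mem_rowSubmodule F).symm) hrank
  rw [probLinearIndependent, Nat.card_congr hnum, Nat.card_congr (patternSupportEquivPi F B),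
    Nat.card_pi, Nat.cast_prod]

end Pattern

/-- For B ∈ {0,1}^{n×k} with n ≤ k and M uniform on S(B,q),
Pr(rank M = n) ≤ ∏_{i=k−n+1}^{k} (1 − q^{-i}), with equality when B is all-ones. -/
theorem stmt13 (F : Type*) [Field F] [Fintype F] (q n k : ℕ)
    (hq : Fintype.card F = q) (hnk : n ≤ k)
    (B : Matrix (Fin n) (Fin k) Bool) :
    (Nat.card {M : Matrix (Fin n) (Fin k) F // M ∈ patternSupport F B ∧ M.rank = n} : ℚ) /
        (Nat.card (patternSupport F B) : ℚ) ≤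
      ∏ i ∈ Finset.Icc (k - n + 1) k, (1 - 1 / (q : ℚ) ^ i) ∧
    ((∀ i j, B i j = true) →
      (Nat.card {M : Matrix (Fin n) (Fin k) F // M ∈ patternSupport F B ∧ M.rank = n} : ℚ) /
          (Nat.card (patternSupport F B) : ℚ) =
        ∏ i ∈ Finset.Icc (k - n + 1) k, (1 - 1 / (q : ℚ) ^ i)) := by
  have hn : n ≤ finrank F (Fin k → F) := by rwa [finrank_fin_fun]
  have hprod :
      ∏ i : Fin n, (1 - (Nat.card F : ℚ) ^ (i : ℕ) / Nat.card F ^ finrank F (Fin k → F)) =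
      ∏ i ∈ Finset.Icc (k - n + 1) k, (1 - 1 / (q : ℚ) ^ i) := by
    rw [finrank_fin_fun, Nat.card_eq_fintype_card, hq]
    exact prod_one_sub_pow_div_pow_eq_prod_Icc (by simp [← hq]) hnk
  rw [prob_rank_eq_probLinearIndependent, ← hprod]
  refine ⟨probLinearIndependent_le hn _, fun hB => ?_⟩
  rw [rowSubmodule_eq_top F hB]
  exact probLinearIndependent_top hn
end
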